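/- Let A be an invertible r×r complex matrix, Γ an invertible diagonal n×n complex matrix, D an r×n complex matrix, and set C = Γ · Dᵀ · A · D (an n×n matrix). Then the space {c · Γ · Dᵀ · A | c ∈ M(1,n;ℂ), c · C = 0} has dimension rank(D) − rank(C). -/

import Mathlib

/-- Right multiplication of row vectors by a matrix, as a linear map. -/
noncomputable def rowMulMap {m k : ℕ} (M : Matrix (Fin m) (Fin k) ℂ) :
    Matrix (Fin 1) (Fin m) ℂ →ₗ[ℂ] Matrix (Fin 1) (Fin k) ℂ where
  toFun c := c * M
  map_add' := by intro x y; exact Matrix.add_mul x y M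
  map_smul' := by intro a x; simp [Matrix.smul_mul]

/-- Row vectors are linearly equivalent to functions. -/
noncomputable def rowEquiv {m : ℕ} : Matrix (Fin 1) (Fin m) ℂ ≃ₗ[ℂ] (Fin m → ℂ) where
  toFun c := c 0
  invFun v := Matrix.of fun _ j => v j
  map_add' _ _ := rfl
  map_smul' _ _ := rfl
  left_inv c := by ext i j; fin_cases i; rfl
  right_inv v := rfl

lemma rowMulMap_eq {m k : ℕ} (M : Matrix (Fin m) (Fin k) ℂ) :
    rowMulMap M = (rowEquiv (m := k)).symm.toLinearMap ∘ₗ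
      M.vecMulLinear ∘ₗ (rowEquiv (m := m)).toLinearMap := by
  ext c i j
  fin_cases i
  simp [rowMulMap, rowEquiv, Matrix.mul_apply, Matrix.vecMul, dotProduct]
  rfl

lemma finrank_range_rowMulMap {m k : ℕ} (M : Matrix (Fin m) (Fin k) ℂ) :
    Module.finrank ℂ (LinearMap.range (rowMulMap M)) = M.rank := by
  have h1 : M.vecMulLinear = M.transpose.mulVecLin := by
    ext v j
    simp [Matrix.mulVec_transpose]
  rw [rowMulMap_eq, LinearMap.range_comp, LinearMap.range_comp,
    LinearEquiv.range, Submodule.map_top]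
  rw [LinearEquiv.finrank_map_eq]
  rw [h1, ← Matrix.rank_transpose M]
  rfl

lemma finrank_ker_rowMulMap {m k : ℕ} (M : Matrix (Fin m) (Fin k) ℂ) :
    Module.finrank ℂ (LinearMap.ker (rowMulMap M)) = m - M.rank := by
  have := LinearMap.finrank_range_add_finrank_ker (rowMulMap M)
  rw [finrank_range_rowMulMap] at this
  have hd : Module.finrank ℂ (Matrix (Fin 1) (Fin m) ℂ) = m := by
    rw [Module.finrank_matrix]; simp
  omega

set_option synthInstance.maxHeartbeats 800000 in
theorem stmt2 (r n : ℕ) (A : Matrix (Fin r) (Fin r) ℂ) (hA : IsUnit A)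
    (Γ : Matrix (Fin n) (Fin n) ℂ) (hΓd : Γ.IsDiag) (hΓ : IsUnit Γ)
    (D : Matrix (Fin r) (Fin n) ℂ) :
    Module.finrank ℂ
      (Submodule.map (rowMulMap (Γ * D.transpose * A))
        (LinearMap.ker (rowMulMap (Γ * D.transpose * A * D)))) =
      D.rank - (Γ * D.transpose * A * D).rank := by
  set f := rowMulMap (Γ * D.transpose * A)
  set C := Γ * D.transpose * A * D
  set K := LinearMap.ker (rowMulMap C)
  -- rank of Γ * Dᵀ * A equals rank of D
  have hrank : (Γ * D.transpose * A).rank = D.rank := by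
    rw [Matrix.rank_mul_eq_left_of_isUnit_det _ _ (hA.map Matrix.detMonoidHom),
      Matrix.rank_mul_eq_right_of_isUnit_det _ _ (hΓ.map Matrix.detMonoidHom),
      Matrix.rank_transpose]
  -- ker f ≤ K
  have hle : LinearMap.ker f ≤ K := by
    intro c hc
    simp only [K, LinearMap.mem_ker] at hc ⊢
    have : rowMulMap C c = rowMulMap D (f c) := by
      simp [rowMulMap, C, f, Matrix.mul_assoc]
    rw [this, hc]
    simp [rowMulMap]
  -- rank-nullity on f restricted to K
  have hres := LinearMap.finrank_range_add_finrank_ker (f.domRestrict K)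
  rw [LinearMap.range_domRestrict] at hres
  have hker : Module.finrank ℂ (LinearMap.ker (f.domRestrict K)) =
      Module.finrank ℂ (LinearMap.ker f) := by
    rw [LinearMap.ker_domRestrict]
    exact (Submodule.comapSubtypeEquivOfLe hle).finrank_eq
  rw [hker] at hres
  have hK : Module.finrank ℂ K = n - C.rank := finrank_ker_rowMulMap C
  have hkf : Module.finrank ℂ (LinearMap.ker f) = n - (Γ * D.transpose * A).rank :=
    finrank_ker_rowMulMap _
  have hCle : C.rank ≤ D.rank := Matrix.rank_mul_le_right (Γ * D.transpose * A) D
  have hDle : D.rank ≤ n := by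
    have := D.rank_le_width
    simpa using this
  rw [hrank] at hkf
  omega
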